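/- arXiv:1905.11384 — 6 statements merged into one kernel-verified Lean document; each statement's English description precedes it below -/
import Mathlib

section
/- Let f : ℝⁿ → ℝ be C² and strictly convex with unique minimum point x*, let x₀ ∈ ℝⁿ, t₀ = f(x₀), and suppose all eigenvalues of the Hessian H(f)(y) lie in [α, β] (0 < α ≤ β) for every y ∈ V(t₀) = {y : f(y) ≤ t₀}; set κ = β/α. For x ∈ V(t₀) let x⁺⁺ = x − (1/α)∇f(x) and x⁺ = x − (1/β)∇f(x). Then ‖x* − x⁺⁺‖² ≤ ‖∇f(x)‖²/α² − (2/α)(f(x) − f(x*)) ≤ (‖∇f(x)‖²/α²)(1 − 1/κ) − (2/α)(f(x⁺) − f(x*)). -/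
/-!
Strong convexity on `V(t₀)` gives `f x* ≥ f x + ⟪∇f x, x* - x⟫ + (α/2)‖x* - x‖²`, and completing
the square turns this into the first inequality; the segment `[x, x*]` stays in `V(t₀)` because `f`
is convex. The second inequality is the descent estimate `f x⁺ ≤ f x - ‖∇f x‖²/(2β)`. Since the
bound `β` is only available on `V(t₀)`, one first shows that the segment `[x, x⁺]` does not leave
the sublevel set of `f x`.
-/

open Set Topology RealInnerProductSpace

section OneDimensional

variable {φ φ' φ'' : ℝ → ℝ}

lemma sub_le_sub_of_hasDerivAt_le {ψ ψ' : ℝ → ℝ} {a b : ℝ} (hab : a ≤ b)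
    (hφ : ∀ t, HasDerivAt φ (φ' t) t) (hψ : ∀ t, HasDerivAt ψ (ψ' t) t)
    (hle : ∀ t ∈ Icc a b, φ' t ≤ ψ' t) : φ b - φ a ≤ ψ b - ψ a := by
  have hmono : MonotoneOn (fun t => ψ t - φ t) (Icc a b) :=
    monotoneOn_of_hasDerivWithinAt_nonneg (convex_Icc a b)
      (fun t _ => ((hψ t).sub (hφ t)).continuousAt.continuousWithinAt)
      (fun t _ => ((hψ t).sub (hφ t)).hasDerivWithinAt)
      (fun t ht => sub_nonneg.2 (hle t (interior_subset ht)))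
  have := hmono (left_mem_Icc.2 hab) (right_mem_Icc.2 hab) hab
  linarith

lemma le_add_mul_of_hasDerivAt_le {K T : ℝ} (hT : 0 ≤ T) (hφ : ∀ t, HasDerivAt φ (φ' t) t)
    (hK : ∀ t ∈ Icc 0 T, φ' t ≤ K) : φ T ≤ φ 0 + K * T := by
  have := sub_le_sub_of_hasDerivAt_le hT hφ (fun t => (hasDerivAt_id t).const_mul K)
    (fun t ht => by simpa using hK t ht)
  simp only [id, mul_zero, sub_zero] at this
  linarith

lemma le_taylor_quadratic_of_hasDerivAt2_le {K T : ℝ} (hT : 0 ≤ T)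
    (hφ : ∀ t, HasDerivAt φ (φ' t) t) (hφ' : ∀ t, HasDerivAt φ' (φ'' t) t)
    (hK : ∀ t ∈ Icc 0 T, φ'' t ≤ K) : φ T ≤ φ 0 + T * φ' 0 + K * T ^ 2 / 2 := by
  have hquad : ∀ t, HasDerivAt (fun s => s * φ' 0 + K * s ^ 2 / 2) (φ' 0 + K * t) t := fun t =>
    (((hasDerivAt_id' t).mul_const (φ' 0)).add
      (((hasDerivAt_pow 2 t).const_mul K).div_const 2)).congr_deriv (by push_cast; ring)
  have := sub_le_sub_of_hasDerivAt_le hT hφ hquad fun t ht =>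
    le_add_mul_of_hasDerivAt_le ht.1 hφ' fun s hs => hK s ⟨hs.1, hs.2.trans ht.2⟩
  linarith

lemma taylor_quadratic_le_of_le_hasDerivAt2 {K T : ℝ} (hT : 0 ≤ T)
    (hφ : ∀ t, HasDerivAt φ (φ' t) t) (hφ' : ∀ t, HasDerivAt φ' (φ'' t) t)
    (hK : ∀ t ∈ Icc 0 T, K ≤ φ'' t) : φ 0 + T * φ' 0 + K * T ^ 2 / 2 ≤ φ T := by
  have := le_taylor_quadratic_of_hasDerivAt2_le (φ := -φ) (K := -K) hT
    (fun t => (hφ t).neg) (fun t => (hφ' t).neg) fun t ht => neg_le_neg (hK t ht)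
  simp only [Pi.neg_apply] at this
  linarith

lemma eventually_nhdsGT_lt_of_hasDerivAt_neg {t d : ℝ} (h : HasDerivAt φ d t) (hd : d < 0) :
    ∀ᶠ r in 𝓝[>] t, φ r < φ t := by
  filter_upwards [h.hasDerivWithinAt.limsup_slope_le' (lt_irrefl t) hd, self_mem_nhdsWithin]
    with r hslope (hr : t < r)
  rw [slope_def_field, div_lt_iff₀ (sub_pos.2 hr), zero_mul] at hslope
  linarith

/-- By convexity, `φ t ≤ φ 0` gives `φ'' ≤ K` on all of `[0, t]`, hence `φ' t < 0` for `t < 1`;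
so `φ` cannot rise above `φ 0` before `t = 1`. -/
lemma le_sub_half_of_hasDerivAt2_le_on_sublevel {K : ℝ} (hK : 0 < K)
    (hφ : ∀ t, HasDerivAt φ (φ' t) t) (hφ' : ∀ t, HasDerivAt φ' (φ'' t) t)
    (hconv : ConvexOn ℝ univ φ) (hφ'0 : φ' 0 = -K)
    (hbound : ∀ t ∈ Icc (0 : ℝ) 1, φ t ≤ φ 0 → φ'' t ≤ K) : φ 1 ≤ φ 0 - K / 2 := by
  have hcont : Continuous φ := continuous_iff_continuousAt.2 fun t => (hφ t).continuousAt
  have hsublevel : Icc (0 : ℝ) 1 ⊆ {t | φ t ≤ φ 0} := by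
    refine IsClosed.Icc_subset_of_forall_mem_nhdsWithin
      ((isClosed_le hcont continuous_const).inter isClosed_Icc) (show φ 0 ≤ φ 0 from le_rfl) ?_
    rintro t ⟨ht, ht0, ht1⟩
    have hIcc : Icc 0 t ⊆ {s | φ s ≤ φ 0} := fun s hs =>
      ((hconv.convex_le (φ 0)).ordConnected.out ⟨mem_univ 0, le_rfl⟩ ⟨mem_univ t, ht⟩ hs).2
    have hslope : φ' t ≤ φ' 0 + K * t := le_add_mul_of_hasDerivAt_le ht0 hφ' fun s hs =>
      hbound s ⟨hs.1, hs.2.trans ht1.le⟩ (hIcc hs)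
    have hneg : φ' t < 0 := by nlinarith
    filter_upwards [eventually_nhdsGT_lt_of_hasDerivAt_neg (hφ t) hneg] with r hr
    exact hr.le.trans ht
  have := le_taylor_quadratic_of_hasDerivAt2_le zero_le_one hφ hφ' fun t ht =>
    hbound t ht (hsublevel ht)
  rw [hφ'0] at this
  linarith

end OneDimensional

section LineRestriction

variable {E : Type*} [NormedAddCommGroup E] [NormedSpace ℝ E] {f : E → ℝ}

lemma hasDerivAt_comp_add_smul {G : Type*} [NormedAddCommGroup G] [NormedSpace ℝ G] {g : E → G}
    (hg : Differentiable ℝ g) (x u : E) (t : ℝ) :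
    HasDerivAt (fun s : ℝ => g (x + s • u)) (fderiv ℝ g (x + t • u) u) t := by
  have hline : HasDerivAt (fun s : ℝ => x + s • u) u t := by
    simpa using ((hasDerivAt_id t).smul_const u).const_add x
  exact (hg (x + t • u)).hasFDerivAt.comp_hasDerivAt t hline

lemma hasDerivAt_fderiv_comp_add_smul (hf : ContDiff ℝ 2 f) (x u : E) (t : ℝ) :
    HasDerivAt (fun s : ℝ => fderiv ℝ f (x + s • u) u)
      (iteratedFDeriv ℝ 2 f (x + t • u) ![u, u]) t := by
  have hf' : Differentiable ℝ (fderiv ℝ f) :=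
    (hf.fderiv_right (m := 1) (by norm_num)).differentiable one_ne_zero
  have := (hasDerivAt_comp_add_smul hf' x u t).clm_apply (hasDerivAt_const t u)
  rw [iteratedFDeriv_two_apply]
  simpa using this

lemma convexOn_comp_add_smul (hf : ContDiff ℝ 2 f) (x u : E)
    (hu : ∀ t : ℝ, 0 ≤ iteratedFDeriv ℝ 2 f (x + t • u) ![u, u]) :
    ConvexOn ℝ univ fun t : ℝ => f (x + t • u) :=
  convexOn_of_hasDerivWithinAt2_nonneg convex_univ
    (fun t _ => (hasDerivAt_comp_add_smul (hf.differentiable (by norm_num)) x u t).continuousAt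
      |>.continuousWithinAt)
    (fun t _ => (hasDerivAt_comp_add_smul (hf.differentiable (by norm_num)) x u t).hasDerivWithinAt)
    (fun t _ => (hasDerivAt_fderiv_comp_add_smul hf x u t).hasDerivWithinAt)
    (fun t _ => hu t)

end LineRestriction

section Gradient

variable {F : Type*} [NormedAddCommGroup F] [InnerProductSpace ℝ F] [CompleteSpace F] {f : F → ℝ}

lemma add_inner_gradient_add_le (hf : ContDiff ℝ 2 f) {a b : F} {m : ℝ}
    (hm : ∀ t ∈ Icc (0 : ℝ) 1,
      m * ‖b - a‖ ^ 2 ≤ iteratedFDeriv ℝ 2 f (a + t • (b - a)) ![b - a, b - a]) :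
    f a + ⟪gradient f a, b - a⟫ + m / 2 * ‖b - a‖ ^ 2 ≤ f b := by
  have := taylor_quadratic_le_of_le_hasDerivAt2 zero_le_one
    (hasDerivAt_comp_add_smul (hf.differentiable (by norm_num)) a (b - a))
    (hasDerivAt_fderiv_comp_add_smul hf a (b - a)) hm
  rw [gradient, InnerProductSpace.toDual_symm_apply]
  simp only [zero_smul, add_zero, one_smul, add_sub_cancel, one_mul, one_pow,
    mul_one] at this
  linarith

lemma apply_sub_inv_smul_gradient_le (hf : ContDiff ℝ 2 f)
    (hconv : ∀ y v : F, 0 ≤ iteratedFDeriv ℝ 2 f y ![v, v]) {a : F} {β : ℝ} (hβ : 0 < β)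
    (hbound : ∀ y, f y ≤ f a → ∀ v : F, iteratedFDeriv ℝ 2 f y ![v, v] ≤ β * ‖v‖ ^ 2) :
    f (a - (1 / β) • gradient f a) ≤ f a - ‖gradient f a‖ ^ 2 / (2 * β) := by
  set g := gradient f a
  rcases eq_or_ne g 0 with hg | hg
  · simp [hg]
  set u : F := -((1 / β) • g)
  have hK : 0 < ‖g‖ ^ 2 / β := by positivity
  have hnorm : β * ‖u‖ ^ 2 = ‖g‖ ^ 2 / β := by
    rw [norm_neg, norm_smul, Real.norm_eq_abs, abs_of_pos (one_div_pos.2 hβ)]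
    field_simp
  have hslope : fderiv ℝ f (a + (0 : ℝ) • u) u = -(‖g‖ ^ 2 / β) := by
    rw [zero_smul, add_zero, ← InnerProductSpace.toDual_symm_apply, ← gradient,
      inner_neg_right, real_inner_smul_right, real_inner_self_eq_norm_sq]
    ring
  have := le_sub_half_of_hasDerivAt2_le_on_sublevel hK
    (hasDerivAt_comp_add_smul (hf.differentiable (by norm_num)) a u)
    (hasDerivAt_fderiv_comp_add_smul hf a u) (convexOn_comp_add_smul hf a u fun t => hconv _ u)
    hslope fun t _ ht => (hbound _ (by simpa using ht) u).trans_eq hnorm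
  have hu : a + (1 : ℝ) • u = a - (1 / β) • g := by rw [one_smul, ← sub_eq_add_neg]
  rw [hu] at this
  simp only [zero_smul, add_zero] at this
  linarith [show ‖g‖ ^ 2 / β / 2 = ‖g‖ ^ 2 / (2 * β) by ring]

end Gradient

theorem ball_shrinking_bound_general {n : ℕ}
    (f : EuclideanSpace ℝ (Fin n) → ℝ)
    (hf : ContDiff ℝ 2 f)
    (hHess : ∀ x v : EuclideanSpace ℝ (Fin n), v ≠ 0 →
      0 < iteratedFDeriv ℝ 2 f x ![v, v])
    (xstar : EuclideanSpace ℝ (Fin n))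
    (hmin : ∀ y, f xstar ≤ f y)
    (x₀ : EuclideanSpace ℝ (Fin n))
    (α β : ℝ) (hα : 0 < α) (hαβ : α ≤ β)
    (hEig : ∀ y, f y ≤ f x₀ → ∀ v : EuclideanSpace ℝ (Fin n),
      α * ‖v‖ ^ 2 ≤ iteratedFDeriv ℝ 2 f y ![v, v] ∧
      iteratedFDeriv ℝ 2 f y ![v, v] ≤ β * ‖v‖ ^ 2)
    (x : EuclideanSpace ℝ (Fin n)) (hx : f x ≤ f x₀) :
    ‖xstar - (x - (1 / α) • gradient f x)‖ ^ 2 ≤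
        ‖gradient f x‖ ^ 2 / α ^ 2 - (2 / α) * (f x - f xstar) ∧
      ‖gradient f x‖ ^ 2 / α ^ 2 - (2 / α) * (f x - f xstar) ≤
        (‖gradient f x‖ ^ 2 / α ^ 2) * (1 - 1 / (β / α)) -
          (2 / α) * (f (x - (1 / β) • gradient f x) - f xstar) := by
  have hconv : ∀ y v, 0 ≤ iteratedFDeriv ℝ 2 f y ![v, v] := fun y v => by
    rcases eq_or_ne v 0 with rfl | hv
    · exact ((iteratedFDeriv ℝ 2 f y).map_coord_zero 0 rfl).ge
    · exact (hHess y v hv).le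
  set g := gradient f x
  set w := xstar - x
  have hsegment : ∀ t ∈ Icc (0 : ℝ) 1, f (x + t • w) ≤ f x₀ := fun t ht => by
    have := (convexOn_comp_add_smul hf x w fun t => hconv _ w).le_on_segment (mem_univ 0)
      (mem_univ 1) (by rwa [segment_eq_Icc zero_le_one])
    simp only [zero_smul, add_zero, one_smul, w, add_sub_cancel] at this
    exact this.trans (max_le hx ((hmin x).trans hx))
  have hstrong : f x + ⟪g, w⟫ + α / 2 * ‖w‖ ^ 2 ≤ f xstar :=
    add_inner_gradient_add_le hf fun t ht => (hEig _ (hsegment t ht) w).1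
  have hdescent : f (x - (1 / β) • g) ≤ f x - ‖g‖ ^ 2 / (2 * β) :=
    apply_sub_inv_smul_gradient_le hf hconv (hα.trans_le hαβ) fun y hy v =>
      (hEig y (hy.trans hx) v).2
  constructor
  · have hexpand : ‖xstar - (x - (1 / α) • g)‖ ^ 2 =
        ‖w‖ ^ 2 + 2 / α * ⟪g, w⟫ + ‖g‖ ^ 2 / α ^ 2 := by
      rw [show xstar - (x - (1 / α) • g) = w + (1 / α) • g by module, norm_add_sq_real,
        real_inner_smul_right, norm_smul, real_inner_comm, Real.norm_eq_abs,
        abs_of_pos (one_div_pos.2 hα)]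
      ring
    have hscale : 2 / α * (α / 2 * ‖w‖ ^ 2) = ‖w‖ ^ 2 := by field_simp
    rw [hexpand]
    linarith [mul_le_mul_of_nonneg_left hstrong (by positivity : (0 : ℝ) ≤ 2 / α)]
  · have hgap : ‖g‖ ^ 2 / α ^ 2 * (1 - 1 / (β / α)) =
        ‖g‖ ^ 2 / α ^ 2 - 2 / α * (‖g‖ ^ 2 / (2 * β)) := by
      field_simp
    rw [hgap]
    linarith [mul_le_mul_of_nonneg_left hdescent (by positivity : (0 : ℝ) ≤ 2 / α)]

/-- With `x⁺⁺ = x - (1/α)∇f(x)`, `x⁺ = x - (1/β)∇f(x)`, `κ = β/α`: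
`‖x* - x⁺⁺‖² ≤ ‖∇f x‖²/α² - (2/α)(f x - f x*) ≤ (‖∇f x‖²/α²)(1 - 1/κ) - (2/α)(f x⁺ - f x*)`. -/
theorem ball_shrinking_bound {n : ℕ}
    (f : EuclideanSpace ℝ (Fin n) → ℝ)
    (hf : ContDiff ℝ 2 f)
    (hHess : ∀ x v : EuclideanSpace ℝ (Fin n), v ≠ 0 →
      0 < iteratedFDeriv ℝ 2 f x ![v, v])
    (xstar : EuclideanSpace ℝ (Fin n))
    (hmin : ∀ y, f xstar ≤ f y)
    (huniq : ∀ y, (∀ z, f y ≤ f z) → y = xstar)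
    (x₀ : EuclideanSpace ℝ (Fin n))
    (α β : ℝ) (hα : 0 < α) (hαβ : α ≤ β)
    (hEig : ∀ y, f y ≤ f x₀ → ∀ v : EuclideanSpace ℝ (Fin n),
      α * ‖v‖ ^ 2 ≤ iteratedFDeriv ℝ 2 f y ![v, v] ∧
      iteratedFDeriv ℝ 2 f y ![v, v] ≤ β * ‖v‖ ^ 2)
    (x : EuclideanSpace ℝ (Fin n)) (hx : f x ≤ f x₀) :
    ‖xstar - (x - (1 / α) • gradient f x)‖ ^ 2 ≤
        ‖gradient f x‖ ^ 2 / α ^ 2 - (2 / α) * (f x - f xstar) ∧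
      ‖gradient f x‖ ^ 2 / α ^ 2 - (2 / α) * (f x - f xstar) ≤
        (‖gradient f x‖ ^ 2 / α ^ 2) * (1 - 1 / (β / α)) -
          (2 / α) * (f (x - (1 / β) • gradient f x) - f xstar) :=
  ball_shrinking_bound_general f hf hHess xstar hmin x₀ α β hα hαβ hEig x hx
end

section
/- Identify ℝⁿ with ℝ^{m₁} × ⋯ × ℝ^{m_d} (d ≥ 2, m₁ + ⋯ + m_d = n) and write x = (x₁,…,x_d); let ∇_l f(x) ∈ ℝ^{m_l} denote the block gradients. Let f : ℝⁿ → ℝ be C² and strictly convex with unique minimum point x*. Let x ∈ ℝⁿ with t = f(x), suppose all eigenvalues of H(f)(y) lie in [α, β] (0 < α ≤ β) for all y ∈ V(t) = {y : f(y) ≤ t}, set κ = β/α, and suppose ∇_p f(x) = 0 for some block p ∈ [d]. If j ∈ [d] satisfies ‖∇_j f(x)‖ = max_{l ∈ [d]} ‖∇_l f(x)‖ and x' is obtained from x by replacing the j-th block with the minimizer of x_j ↦ f(x^j, x_j), then f(x') − f(x*) ≤ (f(x) − f(x*))·(1 − 1/((d−1)κ)). -/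
/-!
Since the block `p` of `∇f(x)` vanishes, `‖∇f(x)‖² ≤ (d - 1) ‖∇_j f(x)‖²`. Strong convexity on
the sublevel set (which contains the segment from `x` to `x*` by convexity) gives the
Polyak–Łojasiewicz inequality `2α (f(x) - f(x*)) ≤ ‖∇f(x)‖²`, and the curvature bound `β` along
the block gradient step gives `f(x') ≤ f(x - β⁻¹ ∇_j f(x)) ≤ f(x) - ‖∇_j f(x)‖² / (2β)`.
Combining the three bounds gives the rate.
-/

open Set Filter Topology

section OneDimensional

variable {φ φ' φ'' : ℝ → ℝ}

lemma sub_le_sub_of_hasDerivAt_le_s7 {g h g' h' : ℝ → ℝ} {a b : ℝ} (hab : a ≤ b)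
    (hg : ∀ u ∈ Icc a b, HasDerivAt g (g' u) u) (hh : ∀ u ∈ Icc a b, HasDerivAt h (h' u) u)
    (hle : ∀ u ∈ Ioo a b, g' u ≤ h' u) : g b - g a ≤ h b - h a := by
  have hmono : MonotoneOn (h - g) (Icc a b) := by
    refine monotoneOn_of_hasDerivWithinAt_nonneg (convex_Icc a b)
      (fun u hu => ((hh u hu).sub (hg u hu)).continuousAt.continuousWithinAt)
      (fun u hu => ((hh u (interior_subset hu)).sub (hg u (interior_subset hu))).hasDerivWithinAt)
      (fun u hu => ?_)
    rw [interior_Icc] at hu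
    exact sub_nonneg.2 (hle u hu)
  have := hmono (left_mem_Icc.2 hab) (right_mem_Icc.2 hab) hab
  simp only [Pi.sub_apply] at this
  linarith

lemma deriv_le_of_deriv2_le (hφ' : ∀ u, HasDerivAt φ' (φ'' u) u) {L s : ℝ} (hs : 0 ≤ s)
    (hL : ∀ u ∈ Icc 0 s, φ'' u ≤ L) : φ' s ≤ φ' 0 + L * s := by
  have := sub_le_sub_of_hasDerivAt_le_s7 (h := fun u => L * u) hs (fun u _ => hφ' u)
    (fun u _ => (hasDerivAt_id u).const_mul L |>.congr_deriv (mul_one L))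
    (fun u hu => hL u (Ioo_subset_Icc_self hu))
  linarith

lemma le_quadratic_of_deriv2_le (hφ : ∀ u, HasDerivAt φ (φ' u) u)
    (hφ' : ∀ u, HasDerivAt φ' (φ'' u) u) {L s : ℝ} (hs : 0 ≤ s)
    (hL : ∀ u ∈ Icc 0 s, φ'' u ≤ L) : φ s ≤ φ 0 + φ' 0 * s + L * s ^ 2 / 2 := by
  have hq : ∀ u : ℝ, HasDerivAt (fun u => φ' 0 * u + L * u ^ 2 / 2) (φ' 0 + L * u) u := by
    intro u
    refine (((hasDerivAt_id' u).const_mul (φ' 0)).add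
      (((hasDerivAt_pow 2 u).const_mul L).div_const 2)).congr_deriv ?_
    push_cast; ring
  have := sub_le_sub_of_hasDerivAt_le_s7 hs (fun u _ => hφ u) (fun u _ => hq u)
    (fun u hu => deriv_le_of_deriv2_le hφ' hu.1.le
      (fun v hv => hL v ⟨hv.1, hv.2.trans hu.2.le⟩))
  linarith

lemma quadratic_le_of_le_deriv2 (hφ : ∀ u, HasDerivAt φ (φ' u) u)
    (hφ' : ∀ u, HasDerivAt φ' (φ'' u) u) {A s : ℝ} (hs : 0 ≤ s)
    (hA : ∀ u ∈ Icc 0 s, A ≤ φ'' u) : φ 0 + φ' 0 * s + A * s ^ 2 / 2 ≤ φ s := by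
  have := le_quadratic_of_deriv2_le (fun u => (hφ u).neg) (fun u => (hφ' u).neg) hs
    (fun u hu => neg_le_neg (hA u hu))
  simp only [Pi.neg_apply, neg_mul] at this
  linarith

lemma HasDerivAt.eventually_nhdsGT_lt {f : ℝ → ℝ} {f' x : ℝ} (hf : HasDerivAt f f' x)
    (hf' : f' < 0) : ∀ᶠ u in 𝓝[>] x, f u < f x := by
  filter_upwards [(hasDerivAt_iff_tendsto_slope_left_right.1 hf).2.eventually (gt_mem_nhds hf'),
    self_mem_nhdsWithin] with u hslope hu
  rw [slope_def_field, div_neg_iff] at hslope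
  rcases hslope with ⟨-, h⟩ | ⟨h, -⟩ <;> linarith [mem_Ioi.1 hu]

lemma le_sub_sq_div_of_deriv2_le_on_sublevel (hφ : ∀ u, HasDerivAt φ (φ' u) u)
    (hφ' : ∀ u, HasDerivAt φ' (φ'' u) u) {L : ℝ} (hL : 0 < L) (hφ'0 : φ' 0 ≤ 0)
    (hsmooth : ∀ u, φ u ≤ φ 0 → φ'' u ≤ L) :
    φ (-φ' 0 / L) ≤ φ 0 - φ' 0 ^ 2 / (2 * L) := by
  set s := -φ' 0 / L
  have hs : 0 ≤ s := div_nonneg (neg_nonneg.2 hφ'0) hL.le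
  have hcont : Continuous φ := continuous_iff_continuousAt.2 fun u => (hφ u).continuousAt
  -- The bound `φ'' ≤ L` is only known on the sublevel set; continuous induction keeps `[0, s]`
  -- inside it, since `φ' < 0` on `[0, s)` as long as it is.
  have hsublevel : Icc 0 s ⊆ {u | φ u ≤ φ 0} := by
    refine ((isClosed_le hcont continuous_const).inter isClosed_Icc)
      |>.Icc_subset_of_forall_mem_nhdsGT_of_Icc_subset (le_refl (φ 0)) fun t ht hsub => ?_
    have hderiv : φ' t < 0 := calc
      φ' t ≤ φ' 0 + L * t := deriv_le_of_deriv2_le hφ' ht.1 fun u hu => hsmooth u (hsub hu)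
      _ < φ' 0 + L * s := by gcongr; exact ht.2
      _ = 0 := by simp only [s]; field_simp; ring
    filter_upwards [(hφ t).eventually_nhdsGT_lt hderiv] with u hu
    exact hu.le.trans (hsub (right_mem_Icc.2 ht.1))
  calc φ s ≤ φ 0 + φ' 0 * s + L * s ^ 2 / 2 :=
        le_quadratic_of_deriv2_le hφ hφ' hs fun u hu => hsmooth u (hsublevel hu)
    _ = φ 0 - φ' 0 ^ 2 / (2 * L) := by simp only [s]; field_simp; ring

end OneDimensional

section Line

variable {E : Type*} [NormedAddCommGroup E] [NormedSpace ℝ E] {f : E → ℝ}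

lemma ContDiff.hasDerivAt_comp_line (hf : ContDiff ℝ 2 f) (x w : E) (s : ℝ) :
    HasDerivAt (fun u : ℝ => f (x + u • w)) (fderiv ℝ f (x + s • w) w) s :=
  (hf.differentiable (by norm_num) _).hasFDerivAt.comp_hasDerivAt s
    (((hasDerivAt_id s).smul_const w).const_add x |>.congr_deriv (one_smul ℝ w))

lemma ContDiff.hasDerivAt_fderiv_comp_line (hf : ContDiff ℝ 2 f) (x w : E) (s : ℝ) :
    HasDerivAt (fun u : ℝ => fderiv ℝ f (x + u • w) w)
      (iteratedFDeriv ℝ 2 f (x + s • w) ![w, w]) s := by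
  have hline : HasDerivAt (fun u : ℝ => x + u • w) w s := by
    simpa using ((hasDerivAt_id s).smul_const w).const_add x
  have hdiff : Differentiable ℝ (fderiv ℝ f) :=
    (hf.fderiv_right (m := 1) (by norm_num)).differentiable (by norm_num)
  have hdf : HasFDerivAt (fderiv ℝ f) (fderiv ℝ (fderiv ℝ f) (x + s • w)) (x + s • w) :=
    (hdiff _).hasFDerivAt
  have hcomp : HasDerivAt (fun u : ℝ => fderiv ℝ f (x + u • w))
      (fderiv ℝ (fderiv ℝ f) (x + s • w) w) s :=
    hdf.comp_hasDerivAt s hline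
  have := hcomp.clm_apply (hasDerivAt_const s w)
  simp only [map_zero, add_zero] at this
  rw [iteratedFDeriv_two_apply]
  simpa using this

lemma ContDiff.convexOn_comp_line (hf : ContDiff ℝ 2 f)
    (hconv : ∀ z v, 0 ≤ iteratedFDeriv ℝ 2 f z ![v, v]) (x w : E) :
    ConvexOn ℝ univ (fun u : ℝ => f (x + u • w)) :=
  convexOn_of_hasDerivWithinAt2_nonneg convex_univ
    (fun u _ => (hf.hasDerivAt_comp_line x w u).continuousAt.continuousWithinAt)
    (fun u _ => (hf.hasDerivAt_comp_line x w u).hasDerivWithinAt)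
    (fun u _ => (hf.hasDerivAt_fderiv_comp_line x w u).hasDerivWithinAt)
    (fun _ _ => hconv _ _)

lemma ContDiff.le_sub_norm_sq_div_of_fderiv_eq (hf : ContDiff ℝ 2 f) {x v : E}
    (hv : fderiv ℝ f x v = -‖v‖ ^ 2) {β : ℝ} (hβ : 0 < β)
    (hsmooth : ∀ z, f z ≤ f x → iteratedFDeriv ℝ 2 f z ![v, v] ≤ β * ‖v‖ ^ 2) :
    f (x + β⁻¹ • v) ≤ f x - ‖v‖ ^ 2 / (2 * β) := by
  rcases eq_or_ne v 0 with rfl | hv0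
  · simp
  have hpos : 0 < β * ‖v‖ ^ 2 := by positivity
  have h := le_sub_sq_div_of_deriv2_le_on_sublevel (hf.hasDerivAt_comp_line x v)
    (hf.hasDerivAt_fderiv_comp_line x v) hpos (by simp [hv])
    (fun u hu => hsmooth _ (by simpa using hu))
  have hstep : -(-‖v‖ ^ 2) / (β * ‖v‖ ^ 2) = β⁻¹ := by field_simp
  have hgain : (-‖v‖ ^ 2) ^ 2 / (2 * (β * ‖v‖ ^ 2)) = ‖v‖ ^ 2 / (2 * β) := by field_simp
  simpa only [zero_smul, add_zero, hv, hstep, hgain] using h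

end Line

section InnerProduct

variable {E : Type*} [NormedAddCommGroup E] [InnerProductSpace ℝ E] [CompleteSpace E] {f : E → ℝ}

lemma ContDiff.two_mul_sub_le_norm_gradient_sq (hf : ContDiff ℝ 2 f)
    (hconv : ∀ z v, 0 ≤ iteratedFDeriv ℝ 2 f z ![v, v]) {x y : E} (hyx : f y ≤ f x)
    {α : ℝ} (hα : 0 ≤ α)
    (hstrong : ∀ z, f z ≤ f x → ∀ v, α * ‖v‖ ^ 2 ≤ iteratedFDeriv ℝ 2 f z ![v, v]) :
    2 * α * (f x - f y) ≤ ‖gradient f x‖ ^ 2 := by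
  set w := y - x
  have hsegment : ∀ u ∈ Icc (0 : ℝ) 1, f (x + u • w) ≤ f x := fun u hu => by
    simpa [w, hyx] using (hf.convexOn_comp_line hconv x w).le_max_of_mem_Icc
      (mem_univ 0) (mem_univ 1) hu
  have hlower := quadratic_le_of_le_deriv2 (hf.hasDerivAt_comp_line x w)
    (hf.hasDerivAt_fderiv_comp_line x w) zero_le_one
    (fun u hu => hstrong _ (hsegment u hu) w)
  have hcs : -(‖gradient f x‖ * ‖w‖) ≤ fderiv ℝ f x w := by
    rw [← inner_gradient_left]
    exact neg_le_of_abs_le (abs_real_inner_le_norm _ _)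
  simp only [zero_smul, add_zero, one_smul, w, add_sub_cancel] at hlower
  nlinarith [sq_nonneg (‖gradient f x‖ - α * ‖w‖)]

end InnerProduct

section Blocks

variable {ι : Type*} {F : ι → Type*}

lemma PiLp.norm_sq_le_card_sub_one_mul [Fintype ι] [∀ i, SeminormedAddCommGroup (F i)]
    (G : PiLp 2 F) {p : ι} (hp : G p = 0) {N : ℝ} (hN : ∀ l, ‖G l‖ ≤ N) :
    ‖G‖ ^ 2 ≤ (Fintype.card ι - 1) * N ^ 2 := by
  classical
  have hsum : ∑ l, ‖G l‖ ^ 2 = ∑ l ∈ Finset.univ.erase p, ‖G l‖ ^ 2 := by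
    rw [← Finset.sum_erase_add _ _ (Finset.mem_univ p), hp, norm_zero, zero_pow two_ne_zero,
      add_zero]
  calc ‖G‖ ^ 2 = ∑ l ∈ Finset.univ.erase p, ‖G l‖ ^ 2 := by rw [PiLp.norm_sq_eq_of_L2, hsum]
    _ ≤ ∑ _l ∈ Finset.univ.erase p, N ^ 2 :=
        Finset.sum_le_sum fun l _ => pow_le_pow_left₀ (norm_nonneg _) (hN l) 2
    _ = (Fintype.card ι - 1) * N ^ 2 := by
        rw [Finset.sum_const, Finset.card_erase_of_mem (Finset.mem_univ p), nsmul_eq_mul,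
          Finset.card_univ, Nat.cast_sub (Fintype.card_pos_iff.2 ⟨p⟩), Nat.cast_one]

variable [DecidableEq ι] [∀ i, NormedAddCommGroup (F i)] [∀ i, InnerProductSpace ℝ (F i)]

lemma PiLp.inner_single_right [Fintype ι] (x : PiLp 2 F) (j : ι) (a : F j) :
    inner ℝ x (PiLp.single 2 j a) = inner ℝ (x j) a := by
  rw [PiLp.inner_apply, Fintype.sum_eq_single j fun l hl => by simp [hl]]
  simp

lemma PiLp.add_smul_single (x : PiLp 2 F) (j : ι) (c : ℝ) (a : F j) :
    x + c • PiLp.single 2 j a = WithLp.toLp 2 (Function.update x j (x j + c • a)) := by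
  ext l
  rcases eq_or_ne l j with rfl | hl
  · simp
  · simp [hl]

lemma ContDiff.le_sub_norm_sq_div_of_update_block [Fintype ι] [∀ i, CompleteSpace (F i)]
    {f : PiLp 2 F → ℝ} (hf : ContDiff ℝ 2 f)
    (x : PiLp 2 F) (j : ι) {β : ℝ} (hβ : 0 < β)
    (hsmooth : ∀ z, f z ≤ f x → ∀ v, iteratedFDeriv ℝ 2 f z ![v, v] ≤ β * ‖v‖ ^ 2) :
    f (WithLp.toLp 2 (Function.update x j (x j + β⁻¹ • -gradient f x j))) ≤
      f x - ‖gradient f x j‖ ^ 2 / (2 * β) := by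
  set v := PiLp.single 2 j (-gradient f x j)
  have hnorm : ‖v‖ = ‖gradient f x j‖ := by rw [PiLp.norm_single, norm_neg]
  have hv : fderiv ℝ f x v = -‖v‖ ^ 2 := by
    rw [← inner_gradient_left, PiLp.inner_single_right, inner_neg_right,
      real_inner_self_eq_norm_sq, hnorm]
  rw [← PiLp.add_smul_single, ← hnorm]
  exact hf.le_sub_norm_sq_div_of_fderiv_eq hv hβ fun z hz => hsmooth z hz v

end Blocks

theorem partial_min_step_vanishing_block_general {d : ℕ} (hd : 2 ≤ d) {m : Fin d → ℕ}
    (f : PiLp 2 (fun i : Fin d => EuclideanSpace ℝ (Fin (m i))) → ℝ)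
    (hf : ContDiff ℝ 2 f)
    (hHess : ∀ x v : PiLp 2 (fun i : Fin d => EuclideanSpace ℝ (Fin (m i))), v ≠ 0 →
      0 < iteratedFDeriv ℝ 2 f x ![v, v])
    (xstar : PiLp 2 (fun i : Fin d => EuclideanSpace ℝ (Fin (m i))))
    (hmin : ∀ y, f xstar ≤ f y)
    (x : PiLp 2 (fun i : Fin d => EuclideanSpace ℝ (Fin (m i))))
    (α β : ℝ) (hα : 0 < α) (hαβ : α ≤ β)
    (hEig : ∀ y, f y ≤ f x → ∀ v : PiLp 2 (fun i : Fin d => EuclideanSpace ℝ (Fin (m i))),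
      α * ‖v‖ ^ 2 ≤ iteratedFDeriv ℝ 2 f y ![v, v] ∧
      iteratedFDeriv ℝ 2 f y ![v, v] ≤ β * ‖v‖ ^ 2)
    (p : Fin d) (hp : gradient f x p = 0)
    (j : Fin d)
    (hj : ∀ l : Fin d, ‖gradient f x l‖ ≤ ‖gradient f x j‖)
    (y : EuclideanSpace ℝ (Fin (m j)))
    (hy : ∀ z : EuclideanSpace ℝ (Fin (m j)),
      f (WithLp.toLp 2 (Function.update x j y)) ≤ f (WithLp.toLp 2 (Function.update x j z))) :
    f (WithLp.toLp 2 (Function.update x j y)) - f xstar ≤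
      (f x - f xstar) * (1 - 1 / ((d - 1) * (β / α))) := by
  have hβ : 0 < β := hα.trans_le hαβ
  have hd1 : (0 : ℝ) < d - 1 := by
    have : (2 : ℝ) ≤ d := by exact_mod_cast hd
    linarith
  have hconv : ∀ z v, 0 ≤ iteratedFDeriv ℝ 2 f z ![v, v] := fun z v => by
    rcases eq_or_ne v 0 with rfl | hv
    · exact ((iteratedFDeriv ℝ 2 f z).map_coord_zero 0 rfl).ge
    · exact (hHess z v hv).le
  have hgrad : ‖gradient f x‖ ^ 2 ≤ (d - 1) * ‖gradient f x j‖ ^ 2 := by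
    simpa using (gradient f x).norm_sq_le_card_sub_one_mul hp hj
  have hPL : 2 * α * (f x - f xstar) ≤ ‖gradient f x‖ ^ 2 :=
    hf.two_mul_sub_le_norm_gradient_sq hconv (hmin x) hα.le fun z hz v => (hEig z hz v).1
  have hstep : f (WithLp.toLp 2 (Function.update x j y)) ≤
      f x - ‖gradient f x j‖ ^ 2 / (2 * β) :=
    (hy _).trans (hf.le_sub_norm_sq_div_of_update_block x j hβ fun z hz v => (hEig z hz v).2)
  have hgain : α * (f x - f xstar) / ((d - 1) * β) ≤ ‖gradient f x j‖ ^ 2 / (2 * β) := by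
    rw [div_le_div_iff₀ (by positivity) (by positivity)]
    nlinarith
  have hrate : (f x - f xstar) * (1 - 1 / ((d - 1) * (β / α))) =
      f x - f xstar - α * (f x - f xstar) / ((d - 1) * β) := by
    field_simp
  linarith

/-- If the block gradient of `f` already vanishes in some block `p` at `x`,
then one step of the partial-minimization algorithm from `x` decreases the gap to the
minimum by the factor `1 - 1/((d-1)κ)` with `κ = β/α`, the Hessian-eigenvalue bounds
`[α, β]` holding on the sublevel set `V(f x)`. -/
theorem partial_min_step_vanishing_block {d : ℕ} (hd : 2 ≤ d) {m : Fin d → ℕ}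
    (hm : ∀ i, 1 ≤ m i)
    (f : PiLp 2 (fun i : Fin d => EuclideanSpace ℝ (Fin (m i))) → ℝ)
    (hf : ContDiff ℝ 2 f)
    (hHess : ∀ x v : PiLp 2 (fun i : Fin d => EuclideanSpace ℝ (Fin (m i))), v ≠ 0 →
      0 < iteratedFDeriv ℝ 2 f x ![v, v])
    (xstar : PiLp 2 (fun i : Fin d => EuclideanSpace ℝ (Fin (m i))))
    (hmin : ∀ y, f xstar ≤ f y)
    (huniq : ∀ y, (∀ z, f y ≤ f z) → y = xstar)
    (x : PiLp 2 (fun i : Fin d => EuclideanSpace ℝ (Fin (m i))))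
    (α β : ℝ) (hα : 0 < α) (hαβ : α ≤ β)
    (hEig : ∀ y, f y ≤ f x → ∀ v : PiLp 2 (fun i : Fin d => EuclideanSpace ℝ (Fin (m i))),
      α * ‖v‖ ^ 2 ≤ iteratedFDeriv ℝ 2 f y ![v, v] ∧
      iteratedFDeriv ℝ 2 f y ![v, v] ≤ β * ‖v‖ ^ 2)
    (p : Fin d) (hp : gradient f x p = 0)
    (j : Fin d)
    (hj : ∀ l : Fin d, ‖gradient f x l‖ ≤ ‖gradient f x j‖)
    (y : EuclideanSpace ℝ (Fin (m j)))
    (hy : ∀ z : EuclideanSpace ℝ (Fin (m j)),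
      f (WithLp.toLp 2 (Function.update x j y)) ≤ f (WithLp.toLp 2 (Function.update x j z))) :
    f (WithLp.toLp 2 (Function.update x j y)) - f xstar ≤
      (f x - f xstar) * (1 - 1 / ((d - 1) * (β / α))) :=
  partial_min_step_vanishing_block_general hd f hf hHess xstar hmin x α β hα hαβ hEig p hp j hj y hy
end

section
/- Let B = [b_{i₁,…,i_d}] ∈ ℝ₊^{m₁×⋯×m_d} (d ≥ 2, each m_j ≥ 2) be a nonnegative tensor with no zero slice, and let s_k ∈ ℝ^{m_k}, k ∈ [d], be positive vectors satisfying the compatibility condition. Then there exists a nonnegative tensor A ∈ ℝ₊^{m₁×⋯×m_d} that is positively diagonally equivalent to B and has every (k,i_k)-slice sum equal to s_{k,i_k}, if and only if: for all x_k = (x_{k,1},…,x_{k,m_k}) ∈ ℝ^{m_k}, k ∈ [d], satisfying x_{1,i₁} + ⋯ + x_{d,i_d} ≤ 0 whenever b_{i₁,…,i_d} > 0 and s_kᵀx_k = 0 for all k ∈ [d], one has x_{1,i₁} + ⋯ + x_{d,i_d} = 0 whenever b_{i₁,…,i_d} > 0. -/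
/-!
A tensor `A = e^{x₁,i₁ + ⋯ + x_d,i_d} B` has slice sums `s` exactly when `x` is a critical point of
the convex potential `φ(x) = ∑ᵢ Bᵢ e^{∑ₖ xₖ,ᵢₖ} - ∑ₖ sₖᵀxₖ`, so for sufficiency it is enough that
`φ` attains its minimum. `φ` is constant along the subspace `U` on which every `∑ₖ xₖ,ᵢₖ` with
`Bᵢ > 0` and `∑ₖ sₖᵀxₖ` vanish. Shifting each `xₖ` by its `sₖ`-weighted mean (possible by
compatibility) turns the linear condition into: along every direction outside `U`, some
`∑ₖ xₖ,ᵢₖ` on the support or `-∑ₖ sₖᵀxₖ` is positive. By compactness of the unit sphere this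
happens at a uniform linear rate, so `φ` is coercive on a complement of `U`.
Necessity: pairing the slice sums of `A` with `x` gives `∑ᵢ Aᵢ ∑ₖ xₖ,ᵢₖ = ∑ₖ sₖᵀxₖ = 0`,
a sum of nonpositive terms.
-/

open Filter Real

theorem tendsto_mul_exp_mul_sub_mul_atTop {b ε : ℝ} (hb : 0 < b) (hε : 0 < ε) (C : ℝ) :
    Tendsto (fun t => b * exp (ε * t) - C * t) atTop atTop := by
  have h : Tendsto (fun t => t * (b * (exp (ε * t) / t ^ (1 : ℝ)) - C)) atTop atTop :=
    tendsto_id.atTop_mul_atTop₀ <|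
      tendsto_atTop_add_const_right _ _
        ((tendsto_exp_mul_div_rpow_atTop 1 ε hε).const_mul_atTop hb)
  refine h.congr' ?_
  filter_upwards [eventually_gt_atTop 0] with t ht
  rw [rpow_one]
  field_simp

section NormLowerBound

variable {E J : Type*} [NormedAddCommGroup E] [NormedSpace ℝ E] [FiniteDimensional ℝ E]
  [Fintype J] [Nonempty J]

theorem exists_pos_forall_exists_mul_norm_le (f : J → E →L[ℝ] ℝ)
    (hf : ∀ x, (∀ j, f j x ≤ 0) → x = 0) :
    ∃ ε > 0, ∀ x, ∃ j, ε * ‖x‖ ≤ f j x := by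
  rcases subsingleton_or_nontrivial E with hE | hE
  · exact ⟨1, one_pos, fun x => ⟨Classical.arbitrary J, by simp [Subsingleton.elim x 0]⟩⟩
  set G : E → ℝ := fun x => Finset.univ.sup' Finset.univ_nonempty fun j => f j x
  have hG : Continuous G :=
    Continuous.finset_sup'_apply _ fun j _ => (f j).continuous
  obtain ⟨w, hw, hwmin⟩ := (isCompact_sphere (0 : E) 1).exists_isMinOn
    (NormedSpace.sphere_nonempty.2 zero_le_one) hG.continuousOn
  have hw1 : ‖w‖ = 1 := by simpa using hw
  refine ⟨G w, ?_, fun x => ?_⟩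
  · by_contra! hGw
    have := hf w fun j => (Finset.sup'_le_iff _ _).1 hGw j (Finset.mem_univ j)
    simp [this] at hw1
  rcases eq_or_ne x 0 with rfl | hx
  · exact ⟨Classical.arbitrary J, by simp⟩
  have hxw : ‖x‖⁻¹ • x ∈ Metric.sphere (0 : E) 1 := by
    simp [norm_smul, hx]
  obtain ⟨j, -, hj⟩ := (Finset.le_sup'_iff _).1 (isMinOn_iff.1 hwmin _ hxw)
  refine ⟨j, ?_⟩
  rw [map_smul, smul_eq_mul, inv_mul_eq_div, le_div_iff₀ (norm_pos_iff.2 hx)] at hj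
  exact hj

end NormLowerBound

section ExpPotential

variable {E ι : Type*} [NormedAddCommGroup E] [NormedSpace ℝ E] [Fintype ι]

noncomputable def expPotential (b : ι → ℝ) (a : ι → E →L[ℝ] ℝ) (L : E →L[ℝ] ℝ) (x : E) : ℝ :=
  ∑ i, b i * exp (a i x) - L x

variable {b : ι → ℝ} {a : ι → E →L[ℝ] ℝ} {L : E →L[ℝ] ℝ}

theorem continuous_expPotential : Continuous (expPotential b a L) := by
  unfold expPotential
  fun_prop

theorem hasFDerivAt_expPotential (x : E) :
    HasFDerivAt (expPotential b a L) (∑ i, (b i * exp (a i x)) • a i - L) x := by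
  have hterm : ∀ i, HasFDerivAt (fun y => b i * exp (a i y)) ((b i * exp (a i x)) • a i) x :=
    fun i => by simpa [smul_smul] using ((a i).hasFDerivAt.exp).const_mul (b i)
  exact (HasFDerivAt.fun_sum fun i _ => hterm i).sub L.hasFDerivAt

theorem sum_mul_exp_mul_eq_of_forall_le {x : E}
    (hx : ∀ y, expPotential b a L x ≤ expPotential b a L y) (y : E) :
    ∑ i, b i * exp (a i x) * a i y = L y := by
  have h := congrArg (· y) <|
    (IsLocalMin.hasFDerivAt_eq_zero (Eventually.of_forall hx) (hasFDerivAt_expPotential x))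
  simpa [sub_eq_zero, smul_eq_mul] using h

theorem expPotential_add_of_apply_eq_zero {u : E} (hu : ∀ i, b i ≠ 0 → a i u = 0)
    (hLu : L u = 0) (x : E) : expPotential b a L (x + u) = expPotential b a L x := by
  unfold expPotential
  congr 1
  · refine Finset.sum_congr rfl fun i _ => ?_
    rcases eq_or_ne (b i) 0 with hi | hi
    · simp [hi]
    · rw [map_add, hu i hi, add_zero]
  · rw [map_add, hLu, add_zero]

theorem tendsto_expPotential_cocompact [FiniteDimensional ℝ E] (hb : ∀ i, 0 ≤ b i)
    (h : ∀ v, (∀ i, 0 < b i → a i v ≤ 0) → 0 ≤ L v → v = 0) :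
    Tendsto (expPotential b a L) (cocompact E) atTop := by
  set f : Option {i // 0 < b i} → E →L[ℝ] ℝ := fun j => j.elim (-L) fun i => a i
  obtain ⟨ε, hε, hεf⟩ := exists_pos_forall_exists_mul_norm_le f fun x hx =>
    h x (fun i hi => hx (some ⟨i, hi⟩)) (by simpa [f] using hx none)
  have hsum : ∀ x, 0 ≤ ∑ i, b i * exp (a i x) := fun x =>
    Finset.sum_nonneg fun i _ => mul_nonneg (hb i) (exp_pos _).le
  have hbound : ∀ j, ∃ g : ℝ → ℝ, Tendsto g atTop atTop ∧
      ∀ x, ε * ‖x‖ ≤ f j x → g ‖x‖ ≤ expPotential b a L x := by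
    rintro (_ | ⟨i, hi⟩)
    · refine ⟨fun t => ε * t, tendsto_id.const_mul_atTop hε, fun x hx => ?_⟩
      have := hsum x
      replace hx : ε * ‖x‖ ≤ -L x := hx
      simp only [expPotential]
      linarith
    · refine ⟨fun t => b i * exp (ε * t) - ‖L‖ * t,
        tendsto_mul_exp_mul_sub_mul_atTop hi hε _, fun x (hx : ε * ‖x‖ ≤ a i x) => ?_⟩
      have hexp : b i * exp (ε * ‖x‖) ≤ ∑ i, b i * exp (a i x) :=
        (mul_le_mul_of_nonneg_left (exp_le_exp.2 hx) (hb i)).trans <|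
          Finset.single_le_sum (f := fun i => b i * exp (a i x))
            (fun i _ => mul_nonneg (hb i) (exp_pos _).le) (Finset.mem_univ i)
      have hL : L x ≤ ‖L‖ * ‖x‖ := (le_abs_self _).trans (L.le_opNorm x)
      simp only [expPotential]
      linarith
  choose g hg hgφ using hbound
  refine tendsto_atTop.2 fun M => ?_
  filter_upwards [tendsto_norm_cocompact_atTop.eventually
    (eventually_all.2 fun j => (hg j).eventually_ge_atTop M)] with x hx
  obtain ⟨j, hj⟩ := hεf x
  exact (hx j).trans (hgφ j x hj)

theorem exists_forall_expPotential_le [FiniteDimensional ℝ E] (hb : ∀ i, 0 ≤ b i)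
    (hrec : ∀ v, (∀ i, 0 < b i → a i v ≤ 0) → 0 ≤ L v → (∀ i, 0 < b i → a i v = 0) ∧ L v = 0) :
    ∃ x, ∀ y, expPotential b a L x ≤ expPotential b a L y := by
  set U : Submodule ℝ E :=
    (⨅ i : {i // 0 < b i}, LinearMap.ker (a i : E →ₗ[ℝ] ℝ)) ⊓ LinearMap.ker (L : E →ₗ[ℝ] ℝ)
  have hmemU : ∀ v, v ∈ U ↔ (∀ i, 0 < b i → a i v = 0) ∧ L v = 0 := fun v => by
    simp [U]
  have hU : ∀ u ∈ U, ∀ x, expPotential b a L (x + u) = expPotential b a L x := fun u hu => by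
    obtain ⟨hau, hLu⟩ := (hmemU u).1 hu
    exact expPotential_add_of_apply_eq_zero (fun i hi => hau i ((hb i).lt_of_ne' hi)) hLu
  obtain ⟨W, hUW⟩ := U.exists_isCompl
  obtain ⟨x, hx⟩ := (continuous_expPotential (b := b) (a := fun i => (a i).comp W.subtypeL)
    (L := L.comp W.subtypeL)).exists_forall_le <| tendsto_expPotential_cocompact hb
      fun v hav hLv => by
        have hvU : (v : E) ∈ U := (hmemU v).2 (hrec v hav hLv)
        exact Subtype.ext (Submodule.disjoint_def.1 hUW.disjoint _ hvU v.2)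
  refine ⟨x, fun y => ?_⟩
  obtain ⟨u, w, hu, hw, rfl⟩ := Submodule.codisjoint_iff_exists_add_eq.1 hUW.codisjoint y
  rw [add_comm, hU u hu]
  exact hx ⟨w, hw⟩

end ExpPotential

theorem eq_zero_of_sum_mul_eq_zero_of_nonpos {ι : Type*} [Fintype ι] {A f : ι → ℝ}
    (hA : ∀ i, 0 ≤ A i) (hf : ∀ i, 0 < A i → f i ≤ 0) (h : ∑ i, A i * f i = 0) :
    ∀ i, 0 < A i → f i = 0 := by
  have hnonpos : ∀ i ∈ Finset.univ, A i * f i ≤ 0 := fun i _ => by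
    rcases (hA i).lt_or_eq with hi | hi
    · exact mul_nonpos_of_nonneg_of_nonpos hi.le (hf i hi)
    · simp [← hi]
  intro i hi
  have := (Finset.sum_eq_zero_iff_of_nonpos hnonpos).1 h i (Finset.mem_univ i)
  exact (mul_eq_zero.1 this).resolve_left hi.ne'

namespace TensorScaling

variable {d : ℕ} {m : Fin d → ℕ}

def sliceSum (A : ((j : Fin d) → Fin (m j)) → ℝ) (k : Fin d) (ik : Fin (m k)) : ℝ :=
  ∑ i ∈ Finset.univ.filter (fun i : (j : Fin d) → Fin (m j) => i k = ik), A i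

def coordSum (i : (j : Fin d) → Fin (m j)) : ((k : Fin d) → Fin (m k) → ℝ) →L[ℝ] ℝ :=
  ∑ k, (ContinuousLinearMap.proj (i k) : (Fin (m k) → ℝ) →L[ℝ] ℝ).comp
    (ContinuousLinearMap.proj k)

@[simp]
theorem coordSum_apply (i : (j : Fin d) → Fin (m j)) (x : (k : Fin d) → Fin (m k) → ℝ) :
    coordSum i x = ∑ k, x k (i k) := by
  simp [coordSum]

def weightedSum (s : (k : Fin d) → Fin (m k) → ℝ) : ((k : Fin d) → Fin (m k) → ℝ) →L[ℝ] ℝ :=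
  ∑ k, ∑ j, s k j • (ContinuousLinearMap.proj j : (Fin (m k) → ℝ) →L[ℝ] ℝ).comp
    (ContinuousLinearMap.proj k)

@[simp]
theorem weightedSum_apply (s x : (k : Fin d) → Fin (m k) → ℝ) :
    weightedSum s x = ∑ k, ∑ j, s k j * x k j := by
  simp [weightedSum]

theorem sum_mul_sum_eq_sum_sliceSum_mul (A : ((j : Fin d) → Fin (m j)) → ℝ)
    (x : (k : Fin d) → Fin (m k) → ℝ) :
    ∑ i, A i * ∑ k, x k (i k) = ∑ k, ∑ j, sliceSum A k j * x k j := by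
  simp only [Finset.mul_sum, sliceSum, Finset.sum_mul]
  rw [Finset.sum_comm]
  refine Finset.sum_congr rfl fun k _ => ?_
  rw [← Finset.sum_fiberwise Finset.univ (fun i => i k)]
  refine Finset.sum_congr rfl fun j _ => Finset.sum_congr rfl fun i hi => ?_
  rw [(Finset.mem_filter.1 hi).2]

theorem sum_sum_mul_single (c : (k : Fin d) → Fin (m k) → ℝ) (k : Fin d) (j : Fin (m k)) :
    ∑ k', ∑ j', c k' j' * (Pi.single k (Pi.single j 1) : (k : Fin d) → Fin (m k) → ℝ) k' j' =
      c k j := by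
  rw [Finset.sum_eq_single k (fun k' _ hk' => by simp [Pi.single_eq_of_ne hk']) (by simp)]
  simp [Pi.single_apply]

theorem sliceSum_eq_of_forall_sum_mul_sum_eq {A : ((j : Fin d) → Fin (m j)) → ℝ}
    {s : (k : Fin d) → Fin (m k) → ℝ}
    (h : ∀ x : (k : Fin d) → Fin (m k) → ℝ,
      ∑ i, A i * ∑ k, x k (i k) = ∑ k, ∑ j, s k j * x k j)
    (k : Fin d) (j : Fin (m k)) :
    sliceSum A k j = s k j := by
  have := h (Pi.single k (Pi.single j 1) : (k : Fin d) → Fin (m k) → ℝ)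
  rwa [sum_mul_sum_eq_sum_sliceSum_mul, sum_sum_mul_single, sum_sum_mul_single] at this

theorem coordSum_eq_zero_of_linear_condition {B : ((j : Fin d) → Fin (m j)) → ℝ}
    {s : (k : Fin d) → Fin (m k) → ℝ} {τ : ℝ} (hτ : ∀ k, ∑ j, s k j = τ) (hτpos : 0 < τ)
    {i₀ : (j : Fin d) → Fin (m j)} (hi₀ : 0 < B i₀)
    (H : ∀ x : (k : Fin d) → Fin (m k) → ℝ,
      (∀ i : (j : Fin d) → Fin (m j), 0 < B i → ∑ k, x k (i k) ≤ 0) →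
      (∀ k, ∑ i, s k i * x k i = 0) →
      ∀ i : (j : Fin d) → Fin (m j), 0 < B i → ∑ k, x k (i k) = 0)
    (w : (k : Fin d) → Fin (m k) → ℝ) (hw : ∀ i, 0 < B i → coordSum i w ≤ 0)
    (hsw : 0 ≤ weightedSum s w) :
    (∀ i, 0 < B i → coordSum i w = 0) ∧ weightedSum s w = 0 := by
  simp only [coordSum_apply, weightedSum_apply] at hw hsw ⊢
  -- Shifting each `w k` by its `s k`-weighted mean lowers every `∑ k, w k (i k)` by the same `c`.
  set c := (∑ k, ∑ j, s k j * w k j) / τ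
  set v : (k : Fin d) → Fin (m k) → ℝ := fun k j => w k j - (∑ j', s k j' * w k j') / τ
  have hv : ∀ i : (j : Fin d) → Fin (m j), ∑ k, v k (i k) = ∑ k, w k (i k) - c := by
    simp [v, c, Finset.sum_sub_distrib, Finset.sum_div]
  have hvs : ∀ k, ∑ j, s k j * v k j = 0 := fun k => by
    simp only [v, mul_sub, Finset.sum_sub_distrib, ← Finset.sum_mul, hτ k]
    field_simp
    ring
  have hc : 0 ≤ c := div_nonneg hsw hτpos.le
  have hv0 := H v (fun i hi => by rw [hv]; linarith [hw i hi]) hvs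
  have hc0 : c = 0 := by
    have := hv0 i₀ hi₀
    rw [hv] at this
    linarith [hw i₀ hi₀]
  refine ⟨fun i hi => by simpa [hv, hc0] using hv0 i hi, ?_⟩
  simpa [c, hτpos.ne'] using hc0

end TensorScaling

open TensorScaling

/-- Theorem 3.1 of the paper. A nonnegative tensor `B` with no zero
slice can be scaled (by positive diagonal equivalence) to have prescribed positive slice
sums `s k` (satisfying the compatibility condition) if and only if every solution of the
linear system `∑_k x_k(i_k) ≤ 0` on the support of `B` with `sₖᵀxₖ = 0` satisfies
`∑_k x_k(i_k) = 0` on the support of `B`. -/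
theorem tensor_scaling_iff_linear_condition {d : ℕ} (hd : 2 ≤ d) {m : Fin d → ℕ}
    (hm : ∀ j, 2 ≤ m j)
    (B : ((j : Fin d) → Fin (m j)) → ℝ)
    (hB : ∀ i, 0 ≤ B i)
    (hslice : ∀ (k : Fin d) (ik : Fin (m k)),
      ∃ i : (j : Fin d) → Fin (m j), i k = ik ∧ B i ≠ 0)
    (s : (k : Fin d) → Fin (m k) → ℝ) (hs : ∀ k i, 0 < s k i)
    (hcompat : ∀ k l : Fin d, ∑ i, s k i = ∑ i, s l i) :
    (∃ A : ((j : Fin d) → Fin (m j)) → ℝ, (∀ i, 0 ≤ A i) ∧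
      (∃ x : (k : Fin d) → Fin (m k) → ℝ, ∀ i, A i = Real.exp (∑ k, x k (i k)) * B i) ∧
      (∀ (k : Fin d) (ik : Fin (m k)),
        ∑ i ∈ Finset.univ.filter (fun i : (j : Fin d) → Fin (m j) => i k = ik), A i
          = s k ik)) ↔
    (∀ x : (k : Fin d) → Fin (m k) → ℝ,
      (∀ i : (j : Fin d) → Fin (m j), 0 < B i → ∑ k, x k (i k) ≤ 0) →
      (∀ k, ∑ i, s k i * x k i = 0) →
      ∀ i : (j : Fin d) → Fin (m j), 0 < B i → ∑ k, x k (i k) = 0) := by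
  constructor
  · rintro ⟨A, hA, ⟨y, hAy⟩, hAs⟩ x hxle hxs i hi
    have hApos : ∀ i, 0 < A i ↔ 0 < B i := fun i => by
      rw [hAy]
      exact mul_pos_iff_of_pos_left (exp_pos _)
    have hsum : ∑ i, A i * ∑ k, x k (i k) = 0 := by
      simp only [sum_mul_sum_eq_sum_sliceSum_mul, sliceSum, hAs, hxs, Finset.sum_const_zero]
    exact eq_zero_of_sum_mul_eq_zero_of_nonpos hA (fun i hi => hxle i ((hApos i).1 hi)) hsum i
      ((hApos i).2 hi)
  · intro H
    set k₀ : Fin d := ⟨0, by omega⟩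
    obtain ⟨i₀, -, hi₀⟩ := hslice k₀ ⟨0, by have := hm k₀; omega⟩
    have hτpos : 0 < ∑ j, s k₀ j := Finset.sum_pos (fun j _ => hs k₀ j) ⟨i₀ k₀, by simp⟩
    obtain ⟨x, hx⟩ := exists_forall_expPotential_le hB
      (coordSum_eq_zero_of_linear_condition (fun k => hcompat k k₀) hτpos
        ((hB i₀).lt_of_ne' hi₀) H)
    refine ⟨fun i => exp (∑ k, x k (i k)) * B i, fun i => mul_nonneg (exp_pos _).le (hB i),
      ⟨x, fun i => rfl⟩, sliceSum_eq_of_forall_sum_mul_sum_eq fun y => ?_⟩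
    simpa [mul_comm, mul_assoc] using sum_mul_exp_mul_eq_of_forall_le hx y
end

section
/- Let B = [b_{i₁,…,i_d}] ∈ ℝ₊^{m₁×⋯×m_d} (d ≥ 2, each m_j ≥ 2) be a nonnegative tensor with no zero slice, and let s_k ∈ ℝ^{m_k}, k ∈ [d], be positive vectors satisfying the compatibility condition. Then there is at most one tensor A ∈ ℝ₊^{m₁×⋯×m_d} that is positively diagonally equivalent to B and has every (k,i_k)-slice sum equal to s_{k,i_k}: if A and A' are both positively diagonally equivalent to B and both have these slice sums, then A = A'. -/
/-- There is at most one tensor positively diagonally equivalent to a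
nonnegative tensor `B` with no zero slice having the prescribed slice sums `s`. -/
theorem tensor_scaling_unique {d : ℕ} (hd : 2 ≤ d) {m : Fin d → ℕ}
    (hm : ∀ j, 2 ≤ m j)
    (B : ((j : Fin d) → Fin (m j)) → ℝ)
    (hB : ∀ i, 0 ≤ B i)
    (hslice : ∀ (k : Fin d) (ik : Fin (m k)),
      ∃ i : (j : Fin d) → Fin (m j), i k = ik ∧ B i ≠ 0)
    (s : (k : Fin d) → Fin (m k) → ℝ) (hs : ∀ k i, 0 < s k i)
    (hcompat : ∀ k l : Fin d, ∑ i, s k i = ∑ i, s l i)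
    (A A' : ((j : Fin d) → Fin (m j)) → ℝ)
    (hAeq : ∃ x : (k : Fin d) → Fin (m k) → ℝ,
      ∀ i, A i = Real.exp (∑ k, x k (i k)) * B i)
    (hA'eq : ∃ x : (k : Fin d) → Fin (m k) → ℝ,
      ∀ i, A' i = Real.exp (∑ k, x k (i k)) * B i)
    (hAs : ∀ (k : Fin d) (ik : Fin (m k)),
      ∑ i ∈ Finset.univ.filter (fun i : (j : Fin d) → Fin (m j) => i k = ik), A i = s k ik)
    (hA's : ∀ (k : Fin d) (ik : Fin (m k)),
      ∑ i ∈ Finset.univ.filter (fun i : (j : Fin d) → Fin (m j) => i k = ik), A' i = s k ik) :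
    A = A' := by
  obtain ⟨x, hx⟩ := hAeq
  obtain ⟨y, hy⟩ := hA'eq
  set f : ((j : Fin d) → Fin (m j)) → ℝ :=
    fun i => ∑ k, (y k (i k) - x k (i k)) with hf
  have hApos : ∀ i, 0 ≤ A i := fun i => by
    rw [hx]; exact mul_nonneg (Real.exp_pos _).le (hB i)
  have hA' : ∀ i, A' i = Real.exp (f i) * A i := by
    intro i
    rw [hy, hx, ← mul_assoc, ← Real.exp_add, hf]
    congr 2
    rw [← Finset.sum_add_distrib]
    exact Finset.sum_congr rfl fun k _ => by ring
  have key : ∀ (C : ((j : Fin d) → Fin (m j)) → ℝ),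
      (∀ (k : Fin d) (ik : Fin (m k)),
        ∑ i ∈ Finset.univ.filter (fun i : (j : Fin d) → Fin (m j) => i k = ik), C i
          = s k ik) →
      ∑ i, C i * f i = ∑ k, ∑ ik, s k ik * (y k ik - x k ik) := by
    intro C hC
    have h1 : ∑ i, C i * f i = ∑ i, ∑ k, C i * (y k (i k) - x k (i k)) := by
      simp only [hf, Finset.mul_sum]
    rw [h1, Finset.sum_comm]
    refine Finset.sum_congr rfl fun k _ => ?_
    rw [← Finset.sum_fiberwise_of_maps_to (t := Finset.univ)
      (g := fun i : (j : Fin d) → Fin (m j) => i k)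
      (fun i _ => Finset.mem_univ (i k)) (fun i => C i * (y k (i k) - x k (i k)))]
    refine Finset.sum_congr rfl fun ik _ => ?_
    rw [← hC k ik, Finset.sum_mul]
    refine Finset.sum_congr rfl fun i hi => ?_
    have : i k = ik := by simpa using hi
    rw [this]
  have hsum : ∑ i, (A' i - A i) * f i = 0 := by
    have h1 := key A hAs
    have h2 := key A' hA's
    simp [sub_mul, Finset.sum_sub_distrib, h1, h2]
  have hterm : ∀ i ∈ Finset.univ, 0 ≤ (A' i - A i) * f i := by
    intro i _
    rw [hA' i]
    have h : (Real.exp (f i) * A i - A i) * f i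
        = A i * ((Real.exp (f i) - 1) * f i) := by ring
    rw [h]
    refine mul_nonneg (hApos i) ?_
    rcases le_or_gt 0 (f i) with hle | hlt
    · exact mul_nonneg (by linarith [Real.one_le_exp hle]) hle
    · have hexp : Real.exp (f i) ≤ 1 := Real.exp_le_one_iff.mpr hlt.le
      nlinarith
  have hzero := (Finset.sum_eq_zero_iff_of_nonneg hterm).mp hsum
  funext i
  have hi := hzero i (Finset.mem_univ i)
  rcases eq_or_ne (A i) 0 with hA0 | hA0
  · rw [hA' i, hA0, mul_zero]
  · have h : (Real.exp (f i) * A i - A i) * f i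
        = A i * ((Real.exp (f i) - 1) * f i) := by ring
    rw [hA' i, h] at hi
    have h2 := (mul_eq_zero.mp hi).resolve_left hA0
    have hfi : f i = 0 := by
      rcases mul_eq_zero.mp h2 with h3 | h3
      · exact Real.exp_eq_exp.mp (by rw [Real.exp_zero]; linarith)
      · exact h3
    rw [hA' i, hfi, Real.exp_zero, one_mul]
end

section
/- Let B = [b_{i₁,…,i_d}] ∈ ℝ₊^{m₁×⋯×m_d} (d ≥ 2, each m_j ≥ 2) be a nonnegative tensor with no zero slice, and let s_k ∈ ℝ^{m_k}, k ∈ [d], be positive vectors satisfying the compatibility condition. Then there exists a nonnegative tensor A positively diagonally equivalent to B with every (k,i_k)-slice sum equal to s_{k,i_k}, if and only if the restriction f̃ of f̂ to the subspace U(s₁,…,s_d) has a critical point (a point of U(s₁,…,s_d) where the gradient of f̂ is orthogonal to U(s₁,…,s_d)). -/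
/-!
The derivative of `f̂` at `x` in direction `v` is `∑_{k,a} v_{k,a} r_{k,a}`, where `r` are the
slice sums of the scaled tensor `A = e^x B`. So `x` is critical on `U` exactly when `r` vanishes on
the common kernel of the forms `v ↦ ⟨s_k, v_k⟩`, i.e. when `r_k = c_k s_k` for Lagrange
multipliers `c_k`. If `A` already has slice sums `s`, shifting each block `x_k` by a constant moves
`x` into `U` and only rescales `A`, so `x` stays critical. Conversely, every `r_k` has total `∑ A`
and every `s_k` the same total `σ`, so all `c_k` equal `∑ A / σ`, which is positive because `B` has
a nonzero entry; dividing `A` by it, which a shift of a single block of `x` achieves, gives slice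
sums `s`.
-/

open Finset

theorem fderiv_sum_mul_exp_apply {ι E : Type*} [Fintype ι] [NormedAddCommGroup E]
    [NormedSpace ℝ E] (B : ι → ℝ) (L : ι → E →L[ℝ] ℝ) (x v : E) :
    fderiv ℝ (fun y => ∑ i, B i * Real.exp (L i y)) x v
      = ∑ i, B i * Real.exp (L i x) * L i v := by
  have h : HasFDerivAt (fun y => ∑ i, B i * Real.exp (L i y))
      (∑ i, (B i * Real.exp (L i x)) • L i) x :=
    HasFDerivAt.fun_sum fun i _ => by
      simpa only [smul_smul] using ((L i).hasFDerivAt.exp).const_mul (B i)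
  simp [h.fderiv]

theorem sum_mul_sub_div_sum_eq_zero {ι : Type*} [Fintype ι] (s x : ι → ℝ)
    (hs : ∑ i, s i ≠ 0) : ∑ i, s i * (x i - (∑ j, s j * x j) / ∑ j, s j) = 0 := by
  simp only [mul_sub, sum_sub_distrib, ← sum_mul, mul_div_cancel₀ _ hs, sub_self]

section TensorScaling

variable {κ : Type*} {α : κ → Type*} [Fintype κ] [DecidableEq κ]

def PosDiagEquiv (A B : ((k : κ) → α k) → ℝ) : Prop :=
  ∃ x : (k : κ) → α k → ℝ, ∀ i, A i = Real.exp (∑ k, x k (i k)) * B i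

theorem PosDiagEquiv.const_mul {A B : ((k : κ) → α k) → ℝ} (h : PosDiagEquiv A B) {c : ℝ}
    (hc : 0 < c) (k₀ : κ) : PosDiagEquiv (fun i => c * A i) B := by
  obtain ⟨x, hx⟩ := h
  refine ⟨fun k a => x k a + if k = k₀ then Real.log c else 0, fun i => ?_⟩
  beta_reduce
  rw [hx i, sum_add_distrib, sum_ite_eq', if_pos (mem_univ _), Real.exp_add, Real.exp_log hc]
  ring

variable [∀ k, Fintype (α k)] [∀ k, DecidableEq (α k)]

def sliceSum (A : ((k : κ) → α k) → ℝ) (k : κ) (a : α k) : ℝ :=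
  ∑ i ∈ univ.filter (fun i => i k = a), A i

theorem sum_sliceSum (A : ((k : κ) → α k) → ℝ) (k : κ) : ∑ a, sliceSum A k a = ∑ i, A i := by
  unfold sliceSum
  exact sum_fiberwise (κ := α k) univ (fun i => i k) A

theorem sliceSum_const_mul (c : ℝ) (A : ((k : κ) → α k) → ℝ) (k : κ) (a : α k) :
    sliceSum (fun i => c * A i) k a = c * sliceSum A k a :=
  (mul_sum _ _ _).symm

theorem sum_mul_sum_eq_sum_sliceSum (A : ((k : κ) → α k) → ℝ) (v : (k : κ) → α k → ℝ) :
    ∑ i, A i * ∑ k, v k (i k) = ∑ k, ∑ a, v k a * sliceSum A k a := by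
  simp_rw [mul_sum]
  rw [sum_comm]
  refine sum_congr rfl fun k _ => ?_
  rw [← sum_fiberwise (κ := α k) univ (fun i => i k)]
  refine sum_congr rfl fun a _ => ?_
  rw [sliceSum, mul_sum]
  refine sum_congr rfl fun i hi => ?_
  rw [(mem_filter.1 hi).2, mul_comm]

noncomputable def scalingPotential (B : ((k : κ) → α k) → ℝ)
    (y : EuclideanSpace ℝ (Σ k, α k)) : ℝ :=
  ∑ i, B i * Real.exp (∑ k, y ⟨k, i k⟩)

theorem fderiv_scalingPotential_apply (B : ((k : κ) → α k) → ℝ)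
    (x v : EuclideanSpace ℝ (Σ k, α k)) :
    fderiv ℝ (scalingPotential B) x v
      = ∑ k, ∑ a, v ⟨k, a⟩ * sliceSum (fun i => Real.exp (∑ k, x ⟨k, i k⟩) * B i) k a := by
  have h := fderiv_sum_mul_exp_apply B
    (fun i => ∑ k, EuclideanSpace.proj (⟨k, i k⟩ : Σ k, α k)) x v
  simp only [_root_.sum_apply, PiLp.proj_apply] at h
  unfold scalingPotential
  rw [h, ← sum_mul_sum_eq_sum_sliceSum (v := fun k a => v ⟨k, a⟩)]
  exact sum_congr rfl fun i _ => by ring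

theorem exists_eq_mul_of_forall_sum_mul_eq_zero (s r : (k : κ) → α k → ℝ)
    (h : ∀ v : EuclideanSpace ℝ (Σ k, α k), (∀ k, ∑ a, s k a * v ⟨k, a⟩ = 0) →
      ∑ k, ∑ a, v ⟨k, a⟩ * r k a = 0) :
    ∃ c : κ → ℝ, ∀ k a, r k a = c k * s k a := by
  let L : κ → EuclideanSpace ℝ (Σ k, α k) →ₗ[ℝ] ℝ := fun k =>
    ∑ a, s k a • (EuclideanSpace.proj (⟨k, a⟩ : Σ k, α k) : _ →L[ℝ] ℝ).toLinearMap
  let K : EuclideanSpace ℝ (Σ k, α k) →ₗ[ℝ] ℝ :=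
    ∑ k, ∑ a, r k a • (EuclideanSpace.proj (⟨k, a⟩ : Σ k, α k) : _ →L[ℝ] ℝ).toLinearMap
  have hL : ∀ k v, L k v = ∑ a, s k a * v ⟨k, a⟩ := by simp [L]
  have hK : ∀ v, K v = ∑ k, ∑ a, v ⟨k, a⟩ * r k a := by simp [K, mul_comm]
  have hker : ⨅ k, LinearMap.ker (L k) ≤ LinearMap.ker K := fun v hv => by
    simp only [Submodule.mem_iInf, LinearMap.mem_ker, hL, hK] at hv ⊢
    exact h v hv
  obtain ⟨c, hc⟩ :=
    (Submodule.mem_span_range_iff_exists_fun ℝ).1 (mem_span_of_iInf_ker_le_ker hker)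
  refine ⟨c, fun k a => ?_⟩
  have := LinearMap.congr_fun hc (EuclideanSpace.single ⟨k, a⟩ 1)
  simp only [hK, LinearMap.sum_apply, LinearMap.smul_apply, hL, smul_eq_mul,
    PiLp.single_apply, mul_sum, sum_sigma', univ_sigma_univ] at this
  simpa using this.symm

theorem fderiv_scalingPotential_eq_zero_of_sliceSum_eq {A B : ((k : κ) → α k) → ℝ}
    {s x : (k : κ) → α k → ℝ} (hx : ∀ i, A i = Real.exp (∑ k, x k (i k)) * B i)
    (hA : ∀ k a, sliceSum A k a = s k a) (c : κ → ℝ) (v : EuclideanSpace ℝ (Σ k, α k))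
    (hv : ∀ k, ∑ a, s k a * v ⟨k, a⟩ = 0) :
    fderiv ℝ (scalingPotential B) (WithLp.toLp 2 fun p => x p.1 p.2 - c p.1) v = 0 := by
  have hshift : (fun i => Real.exp (∑ k, (x k (i k) - c k)) * B i)
      = fun i => Real.exp (-∑ k, c k) * A i := by
    funext i
    rw [hx i, sum_sub_distrib, sub_eq_add_neg, Real.exp_add]
    ring
  simp only [fderiv_scalingPotential_apply, hshift, sliceSum_const_mul, hA]
  calc ∑ k, ∑ a, v ⟨k, a⟩ * (Real.exp (-∑ k, c k) * s k a)
      = Real.exp (-∑ k, c k) * ∑ k, ∑ a, s k a * v ⟨k, a⟩ := by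
        simp_rw [mul_sum]
        exact sum_congr rfl fun k _ => sum_congr rfl fun a _ => by ring
    _ = 0 := by simp [hv]

theorem sliceSum_div_mul_eq_of_eq_mul {A : ((k : κ) → α k) → ℝ} {s : (k : κ) → α k → ℝ}
    {σ : ℝ} (hs : ∀ k, ∑ a, s k a = σ) (hσ : σ ≠ 0) (hA : ∑ i, A i ≠ 0) {c : κ → ℝ}
    (hc : ∀ k a, sliceSum A k a = c k * s k a) (k : κ) (a : α k) :
    sliceSum (fun i => σ / (∑ i, A i) * A i) k a = s k a := by
  have hck : c k * σ = ∑ i, A i := by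
    rw [← hs k, mul_sum, ← sum_sliceSum A k]
    exact sum_congr rfl fun a _ => (hc k a).symm
  have hck0 : c k ≠ 0 := left_ne_zero_of_mul (hck ▸ hA)
  rw [sliceSum_const_mul, hc, ← hck]
  field_simp

end TensorScaling

/-- Lemma 3.3 of the paper. Scalability of a nonnegative tensor `B`
with no zero slice to prescribed compatible positive slice sums `s` is equivalent to the
existence of a critical point of the restriction of
`f̂(x) = ∑_i B i · exp(∑_k x(k, i k))` to the subspace `U(s₁,…,s_d)`, i.e. a point of `U`
at which the derivative of `f̂` vanishes in all directions of `U`. -/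
theorem tensor_scaling_iff_critical_point {d : ℕ} (hd : 2 ≤ d) {m : Fin d → ℕ}
    (hm : ∀ j, 2 ≤ m j)
    (B : ((j : Fin d) → Fin (m j)) → ℝ)
    (hB : ∀ i, 0 ≤ B i)
    (hslice : ∀ (k : Fin d) (ik : Fin (m k)),
      ∃ i : (j : Fin d) → Fin (m j), i k = ik ∧ B i ≠ 0)
    (s : (k : Fin d) → Fin (m k) → ℝ) (hs : ∀ k i, 0 < s k i)
    (hcompat : ∀ k l : Fin d, ∑ i, s k i = ∑ i, s l i) :
    (∃ A : ((j : Fin d) → Fin (m j)) → ℝ, (∀ i, 0 ≤ A i) ∧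
      (∃ x : (k : Fin d) → Fin (m k) → ℝ, ∀ i, A i = Real.exp (∑ k, x k (i k)) * B i) ∧
      (∀ (k : Fin d) (ik : Fin (m k)),
        ∑ i ∈ Finset.univ.filter (fun i : (j : Fin d) → Fin (m j) => i k = ik), A i
          = s k ik)) ↔
    (∃ x : EuclideanSpace ℝ ((k : Fin d) × Fin (m k)),
      (∀ k : Fin d, ∑ i : Fin (m k), s k i * x ⟨k, i⟩ = 0) ∧
      ∀ v : EuclideanSpace ℝ ((k : Fin d) × Fin (m k)),
        (∀ k : Fin d, ∑ i : Fin (m k), s k i * v ⟨k, i⟩ = 0) →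
        fderiv ℝ (fun y : EuclideanSpace ℝ ((k : Fin d) × Fin (m k)) =>
          ∑ i : (j : Fin d) → Fin (m j), B i * Real.exp (∑ k : Fin d, y ⟨k, i k⟩)) x v
          = 0) := by
  have k₀ : Fin d := ⟨0, by omega⟩
  have hσ : ∀ k, 0 < ∑ a, s k a := fun k =>
    sum_pos (fun a _ => hs k a) (univ_nonempty_iff.2 ⟨⟨0, by have := hm k; omega⟩⟩)
  constructor
  · rintro ⟨A, -, ⟨x, hx⟩, hA⟩
    let c k := (∑ a, s k a * x k a) / ∑ a, s k a
    exact ⟨WithLp.toLp 2 fun p => x p.1 p.2 - c p.1,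
      fun k => sum_mul_sub_div_sum_eq_zero (s k) (x k) (hσ k).ne',
      fun v hv => fderiv_scalingPotential_eq_zero_of_sliceSum_eq hx hA c v hv⟩
  · rintro ⟨x, -, hx⟩
    set A := fun i => Real.exp (∑ k, x ⟨k, i k⟩) * B i
    obtain ⟨c, hc⟩ := exists_eq_mul_of_forall_sum_mul_eq_zero s (sliceSum A) fun v hv => by
      rw [← fderiv_scalingPotential_apply]
      exact hx v hv
    obtain ⟨i₀, -, hi₀⟩ := hslice k₀ ⟨0, by have := hm k₀; omega⟩
    have hApos : 0 < ∑ i, A i := sum_pos' (fun i _ => mul_nonneg (Real.exp_pos _).le (hB i))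
      ⟨i₀, mem_univ _, mul_pos (Real.exp_pos _) ((hB i₀).lt_of_ne' hi₀)⟩
    have hscale : 0 < (∑ a, s k₀ a) / ∑ i, A i := div_pos (hσ k₀) hApos
    exact ⟨_, fun i => mul_nonneg hscale.le (mul_nonneg (Real.exp_pos _).le (hB i)),
      PosDiagEquiv.const_mul ⟨fun k a => x ⟨k, a⟩, fun _ => rfl⟩ hscale k₀,
      sliceSum_div_mul_eq_of_eq_mul (fun k => hcompat k k₀) (hσ k₀).ne' hApos.ne' hc⟩
end

section
/- Let B = [b_{i₁,…,i_d}] ∈ ℝ₊^{m₁×⋯×m_d} (d ≥ 2, each m_j ≥ 2) be a nonnegative tensor with no zero slice, and let s_k ∈ ℝ^{m_k}, k ∈ [d], be positive vectors satisfying the compatibility condition. Then the restriction of f̂ to the subspace V₀(s₁,…,s_d)^⊥ (the orthogonal complement of V₀(s₁,…,s_d) inside U(s₁,…,s_d)) is strictly convex: its Hessian, as a quadratic form restricted to V₀(s₁,…,s_d)^⊥, is positive definite at every point of V₀(s₁,…,s_d)^⊥. -/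
/-!
With `ℓᵢ(y) = ∑ₖ y(k, iₖ)`, the Hessian of `f̂` at `x` is the quadratic form
`v ↦ ∑ᵢ Bᵢ e^{ℓᵢ(x)} ℓᵢ(v)²`. As `B ≥ 0`, it vanishes exactly on `V`, and a nonzero
`v ∈ U` orthogonal to `V ∩ U` cannot lie in `V`.
-/

section

variable {d : ℕ} {m : Fin d → ℕ}

/-- The subspace `U(s₁,…,s_d) = {x : sₖᵀxₖ = 0 for all k}` of
`ℝ^{m₁} × ⋯ × ℝ^{m_d}`, realized inside `EuclideanSpace ℝ ((k : Fin d) × Fin (m k))`. -/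
noncomputable def Usub (s : (k : Fin d) → Fin (m k) → ℝ) :
    Submodule ℝ (EuclideanSpace ℝ ((k : Fin d) × Fin (m k))) where
  carrier := {x | ∀ k : Fin d, ∑ i : Fin (m k), s k i * x ⟨k, i⟩ = 0}
  add_mem' := by
    intro a b ha hb k
    simp only [PiLp.add_apply, mul_add, Finset.sum_add_distrib, ha k, hb k, add_zero]
  zero_mem' := by intro k; simp
  smul_mem' := by
    intro c a ha k
    have : ∀ i : Fin (m k), s k i * (c • a) ⟨k, i⟩ = c * (s k i * a ⟨k, i⟩) := by
      intro i; simp [PiLp.smul_apply, smul_eq_mul]; ring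
    simp only [this, ← Finset.mul_sum, ha k, mul_zero]

/-- The subspace `V(s₁,…,s_d) = {x : x₁(i₁) + ⋯ + x_d(i_d) = 0 whenever B i > 0}`. -/
noncomputable def Vsub (B : ((j : Fin d) → Fin (m j)) → ℝ) :
    Submodule ℝ (EuclideanSpace ℝ ((k : Fin d) × Fin (m k))) where
  carrier := {x | ∀ i : (j : Fin d) → Fin (m j), 0 < B i → ∑ k : Fin d, x ⟨k, i k⟩ = 0}
  add_mem' := by
    intro a b ha hb i hi
    simp only [PiLp.add_apply, Finset.sum_add_distrib, ha i hi, hb i hi, add_zero]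
  zero_mem' := by intro i _; simp
  smul_mem' := by
    intro c a ha i hi
    have : ∀ k : Fin d, (c • a) ⟨k, i k⟩ = c * a ⟨k, i k⟩ := by
      intro k; simp [PiLp.smul_apply, smul_eq_mul]
    simp only [this, ← Finset.mul_sum, ha i hi, mul_zero]

/-- The orthogonal complement `V₀(s₁,…,s_d)^⊥` of `V₀ = V ∩ U` inside `U`. -/
noncomputable def V0perp (B : ((j : Fin d) → Fin (m j)) → ℝ)
    (s : (k : Fin d) → Fin (m k) → ℝ) :
    Submodule ℝ (EuclideanSpace ℝ ((k : Fin d) × Fin (m k))) :=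
  Usub s ⊓ (Vsub B ⊓ Usub s)ᗮ

open Real

theorem hasFDerivAt_sum_mul_exp {E ι : Type*} [NormedAddCommGroup E] [NormedSpace ℝ E]
    [Fintype ι] (c : ι → ℝ) (ℓ : ι → E →L[ℝ] ℝ) (y : E) :
    HasFDerivAt (fun z => ∑ i, c i * exp (ℓ i z))
      (∑ i, (c i * exp (ℓ i y)) • ℓ i) y := by
  refine HasFDerivAt.fun_sum fun i _ => ?_
  simpa [smul_smul] using
    ((hasDerivAt_exp (ℓ i y)).comp_hasFDerivAt y (ℓ i).hasFDerivAt).const_mul (c i)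

theorem iteratedFDeriv_two_sum_mul_exp {E ι : Type*} [NormedAddCommGroup E]
    [NormedSpace ℝ E] [Fintype ι] (c : ι → ℝ) (ℓ : ι → E →L[ℝ] ℝ) (x v w : E) :
    iteratedFDeriv ℝ 2 (fun z => ∑ i, c i * exp (ℓ i z)) x ![v, w] =
      ∑ i, c i * exp (ℓ i x) * (ℓ i v * ℓ i w) := by
  have hD : HasFDerivAt (fun y => ∑ i, (c i * exp (ℓ i y)) • ℓ i)
      (∑ i, ((c i * exp (ℓ i x)) • ℓ i).smulRight (ℓ i)) x :=
    HasFDerivAt.fun_sum fun i _ => by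
      simpa [smul_smul] using
        (((hasDerivAt_exp (ℓ i x)).comp_hasFDerivAt x (ℓ i).hasFDerivAt).const_mul
          (c i)).smul_const (ℓ i)
  rw [iteratedFDeriv_two_apply,
    funext fun y => (hasFDerivAt_sum_mul_exp c ℓ y).fderiv, hD.fderiv]
  simp [mul_assoc]

theorem sum_mul_exp_mul_self_pos {ι : Type*} [Fintype ι] {c : ι → ℝ} (hc : ∀ i, 0 ≤ c i)
    (a t : ι → ℝ) {i₀ : ι} (hc₀ : 0 < c i₀) (ht₀ : t i₀ ≠ 0) :
    0 < ∑ i, c i * exp (a i) * (t i * t i) :=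
  Finset.sum_pos'
    (fun i _ => mul_nonneg (mul_nonneg (hc i) (exp_nonneg _)) (mul_self_nonneg _))
    ⟨i₀, Finset.mem_univ _, mul_pos (mul_pos hc₀ (exp_pos _)) (mul_self_pos.2 ht₀)⟩

theorem Submodule.notMem_of_mem_inf_orthogonal_inf {E : Type*} [NormedAddCommGroup E]
    [InnerProductSpace ℝ E] {U W : Submodule ℝ E} {v : E} (hv : v ∈ U ⊓ (W ⊓ U)ᗮ)
    (hv₀ : v ≠ 0) : v ∉ W := fun hvW =>
  hv₀ <| inner_self_eq_zero.mp <| (Submodule.mem_orthogonal _ v).mp hv.2 v ⟨hvW, hv.1⟩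

noncomputable def coordSum (i : (j : Fin d) → Fin (m j)) :
    EuclideanSpace ℝ ((k : Fin d) × Fin (m k)) →L[ℝ] ℝ :=
  ∑ k : Fin d, EuclideanSpace.proj (⟨k, i k⟩ : (k : Fin d) × Fin (m k))

theorem coordSum_apply (i : (j : Fin d) → Fin (m j))
    (y : EuclideanSpace ℝ ((k : Fin d) × Fin (m k))) :
    coordSum i y = ∑ k : Fin d, y ⟨k, i k⟩ := by
  simp [coordSum]

theorem exists_coordSum_ne_zero_of_notMem_Vsub {B : ((j : Fin d) → Fin (m j)) → ℝ}
    {v : EuclideanSpace ℝ ((k : Fin d) × Fin (m k))} (hv : v ∉ Vsub B) :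
    ∃ i, 0 < B i ∧ coordSum i v ≠ 0 := by
  simpa [Vsub, coordSum_apply] using hv

theorem restriction_strictly_convex_general {d : ℕ} {m : Fin d → ℕ}
    (B : ((j : Fin d) → Fin (m j)) → ℝ)
    (hB : ∀ i, 0 ≤ B i)
    (s : (k : Fin d) → Fin (m k) → ℝ) :
    ∀ x ∈ V0perp B s, ∀ v ∈ V0perp B s, v ≠ 0 →
      0 < iteratedFDeriv ℝ 2
        (fun y : EuclideanSpace ℝ ((k : Fin d) × Fin (m k)) =>
          ∑ i : (j : Fin d) → Fin (m j), B i * Real.exp (∑ k : Fin d, y ⟨k, i k⟩))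
        x ![v, v] := by
  intro x _ v hv hv₀
  obtain ⟨i₀, hB₀, hi₀⟩ := exists_coordSum_ne_zero_of_notMem_Vsub
    (Submodule.notMem_of_mem_inf_orthogonal_inf hv hv₀)
  simp only [← coordSum_apply]
  rw [iteratedFDeriv_two_sum_mul_exp]
  exact sum_mul_exp_mul_self_pos hB _ _ hB₀ hi₀

/-- Lemma 3.4 of the paper. The restriction of
`f̂(x) = ∑_i B i · exp(∑_k x(k, i k))` to `V₀(s₁,…,s_d)^⊥` is strictly convex: its
Hessian, as a quadratic form restricted to `V₀(s₁,…,s_d)^⊥`, is positive definite at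
every point of `V₀(s₁,…,s_d)^⊥`. -/
theorem restriction_strictly_convex {d : ℕ} {m : Fin d → ℕ} (hd : 2 ≤ d)
    (hm : ∀ j, 2 ≤ m j)
    (B : ((j : Fin d) → Fin (m j)) → ℝ)
    (hB : ∀ i, 0 ≤ B i)
    (hslice : ∀ (k : Fin d) (ik : Fin (m k)),
      ∃ i : (j : Fin d) → Fin (m j), i k = ik ∧ B i ≠ 0)
    (s : (k : Fin d) → Fin (m k) → ℝ) (hs : ∀ k i, 0 < s k i)
    (hcompat : ∀ k l : Fin d, ∑ i, s k i = ∑ i, s l i) :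
    ∀ x ∈ V0perp B s, ∀ v ∈ V0perp B s, v ≠ 0 →
      0 < iteratedFDeriv ℝ 2
        (fun y : EuclideanSpace ℝ ((k : Fin d) × Fin (m k)) =>
          ∑ i : (j : Fin d) → Fin (m j), B i * Real.exp (∑ k : Fin d, y ⟨k, i k⟩))
        x ![v, v] :=
  restriction_strictly_convex_general B hB s

end
end
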